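/- arXiv:2309.14039 — 2 statements merged into one kernel-verified Lean document; each statement's English description precedes it below -/
import Mathlib

section
/- For any superport circuit there exists a collection of currents I_{kl} (1 ≤ k,l ≤ n) and voltages U_1,…,U_n satisfying axioms (C), (I), (P), (B); moreover, the currents are unique, and the voltages are unique up to adding the same constant to all of them. -/
open Finset BigOperators
open scoped Classical

namespace Superport

/-- A superport network: a finite connected simple graph on `Fin n` with conductances `c`
and `p` nonempty pairwise disjoint superports `A 0, …, A (p-1)` occupying the initial
segment of the vertices, ordered consecutively. -/
structure Network where
  n : ℕ
  p : ℕ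
  graph : SimpleGraph (Fin n)
  c : Fin n → Fin n → ℝ
  A : Fin p → Finset (Fin n)
  p_pos : 0 < p
  connected : graph.Connected
  c_symm : ∀ k l, c k l = c l k
  c_pos : ∀ k l, graph.Adj k l → 0 < c k l
  c_zero : ∀ k l, ¬ graph.Adj k l → c k l = 0
  A_nonempty : ∀ i, (A i).Nonempty
  A_disjoint : ∀ i j, i ≠ j → Disjoint (A i) (A j)
  A_ordered : ∀ i j u v, i < j → u ∈ A i → v ∈ A j → u < v
  boundary_initial : ∀ v : Fin n, (∃ i, v ∈ A i) ↔ (v : ℕ) < ∑ i, (A i).card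

namespace Network

variable (N : Network)

/-- The set of boundary vertices. -/
def M : Finset (Fin N.n) := Finset.univ.biUnion N.A

/-- The number of boundary vertices. -/
def m : ℕ := N.M.card

theorem mem_M_iff {v : Fin N.n} : v ∈ N.M ↔ ∃ i, v ∈ N.A i := by
  simp [M, Finset.mem_biUnion]

/-- The root of the superport of a boundary vertex `v` (the vertex of maximal number
in the superport containing `v`); for interior `v` we set `root v = v`. -/
noncomputable def root (v : Fin N.n) : Fin N.n :=
  if h : ∃ i, v ∈ N.A i then (N.A h.choose).max' ⟨v, h.choose_spec⟩ else v

/-- The index of the last superport. -/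
def lastPort : Fin N.p := ⟨N.p - 1, Nat.sub_lt N.p_pos Nat.one_pos⟩

theorem M_nonempty : N.M.Nonempty := by
  obtain ⟨v, hv⟩ := N.A_nonempty N.lastPort
  exact ⟨v, N.mem_M_iff.mpr ⟨N.lastPort, hv⟩⟩

theorem root_mem {v : Fin N.n} (hv : v ∈ N.M) : N.root v ∈ N.M := by
  have h : ∃ i, v ∈ N.A i := N.mem_M_iff.mp hv
  rw [root, dif_pos h]
  exact N.mem_M_iff.mpr ⟨h.choose, (N.A h.choose).max'_mem _⟩

theorem root_eq_self_of_max {v : Fin N.n} (hv : v ∈ N.M) (hmax : ∀ u ∈ N.M, u ≤ v) :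
    N.root v = v := by
  have h : ∃ i, v ∈ N.A i := N.mem_M_iff.mp hv
  rw [root, dif_pos h]
  exact le_antisymm (hmax _ (N.mem_M_iff.mpr ⟨h.choose, (N.A h.choose).max'_mem _⟩))
    (Finset.le_max' _ _ h.choose_spec)

/-- Axioms (C), (I), (P), (B) for voltages `U`, currents `I`, and prescribed voltage
differences `ΔU` (only the values of `ΔU` at non-root boundary vertices are relevant). -/
def Axioms (ΔU U : Fin N.n → ℝ) (I : Fin N.n → Fin N.n → ℝ) : Prop :=
  (∀ k l, I k l = N.c k l * (U k - U l)) ∧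
  (∀ k, k ∉ N.M → ∑ l, I k l = 0) ∧
  (∀ i : Fin N.p, i ≠ N.lastPort → ∑ k ∈ N.A i, ∑ l, I k l = 0) ∧
  (∀ k, k ∈ N.M → N.root k ≠ k → U k - U (N.root k) = ΔU k)

/-- The weight of a subgraph: the product of the conductances of its edges. -/
noncomputable def weight (H : SimpleGraph (Fin N.n)) : ℝ :=
  ∏ e ∈ (Set.toFinite H.edgeSet).toFinset, Sym2.lift ⟨N.c, N.c_symm⟩ e

/-- The number of edges of a subgraph. -/
noncomputable def edgeCount (H : SimpleGraph (Fin N.n)) : ℕ :=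
  (Set.toFinite H.edgeSet).toFinset.card

/-- Two vertices lie in a common superport. -/
def samePort (u v : Fin N.n) : Prop := ∃ i, u ∈ N.A i ∧ v ∈ N.A i

/-- The `X`-equivalence: two boundary vertices not in `X` are equivalent iff they lie in
the same superport; each interior vertex and each vertex of `X` forms a singleton class.
For `X = ∅` this is the equivalence relation `∼`. -/
def xSetoid (X : Set (Fin N.n)) : Setoid (Fin N.n) where
  r u v := u = v ∨ (u ∉ X ∧ v ∉ X ∧ N.samePort u v)
  iseqv := by
    constructor
    · intro u; exact Or.inl rfl
    · rintro u v (rfl | ⟨hu, hv, i, hui, hvi⟩)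
      · exact Or.inl rfl
      · exact Or.inr ⟨hv, hu, i, hvi, hui⟩
    · rintro u v w huv hvw
      rcases huv with rfl | ⟨hu, hv, i, hui, hvi⟩
      · exact hvw
      rcases hvw with rfl | ⟨hv', hw, j, hvj, hwj⟩
      · exact Or.inr ⟨hu, hv, i, hui, hvi⟩
      · have hij : i = j := by
          by_contra hij
          exact (Finset.disjoint_left.mp (N.A_disjoint i j hij) hvi) hvj
        exact Or.inr ⟨hu, hw, i, hui, hij ▸ hwj⟩

/-- The quotient of a graph `H` by an equivalence relation `s`: classes `a ≠ b` are
adjacent iff some representatives are adjacent in `H`. -/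
def quotGraph (H : SimpleGraph (Fin N.n)) (s : Setoid (Fin N.n)) :
    SimpleGraph (Quotient s) where
  Adj a b := a ≠ b ∧ ∃ u v, H.Adj u v ∧ Quotient.mk s u = a ∧ Quotient.mk s v = b
  symm := by
    constructor
    rintro a b ⟨hab, u, v, huv, hu, hv⟩
    exact ⟨hab.symm, v, u, huv.symm, hv, hu⟩
  loopless := by
    constructor
    rintro a ⟨hab, -⟩
    exact hab rfl

/-- A spanning forest of the network. -/
def IsSpanningForest (H : SimpleGraph (Fin N.n)) : Prop := H ≤ N.graph ∧ H.IsAcyclic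

/-- A spanning forest becomes a spanning tree in the quotient by the `X`-equivalence
(in the multigraph sense): the quotient is connected and the number of edges of the
forest is one less than the number of equivalence classes.  For `X = {i}` this is
"valid relative to the vertex `i`"; for `X = ∅` this is "valid". -/
def IsValidRel (X : Set (Fin N.n)) (H : SimpleGraph (Fin N.n)) : Prop :=
  N.IsSpanningForest H ∧ (N.quotGraph H (N.xSetoid X)).Connected ∧
    N.edgeCount H + 1 = Nat.card (Quotient (N.xSetoid X))

/-- A valid forest: a spanning forest which becomes a spanning tree in the quotient
by the equivalence `∼`. -/
def IsValidForest (H : SimpleGraph (Fin N.n)) : Prop := N.IsValidRel ∅ H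

/-- The sign `sgn(H, i, j)` of a spanning forest `H` with respect to vertices `i, j`. -/
noncomputable def sgnIJ (H : SimpleGraph (Fin N.n)) (i j : Fin N.n) : ℝ :=
  if i = j ∨ ¬ (N.quotGraph H (N.xSetoid {i, j})).Reachable
      (Quotient.mk (N.xSetoid {i, j}) i) (Quotient.mk (N.xSetoid {i, j}) j)
  then 1 else -1

/-- The type of non-root boundary vertices. -/
abbrev NonRoot := {v : Fin N.n // v ∈ N.M ∧ N.root v ≠ v}

/-- The type of boundary vertices. -/
abbrev Bdry := {v : Fin N.n // v ∈ N.M}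

/-- `L` is the response matrix of the superport network: for any admissible voltages and
currents, the incoming currents at the non-root boundary vertices are obtained from the
prescribed voltage differences by multiplication by `L`. -/
def IsResponse (L : Matrix N.NonRoot N.NonRoot ℝ) : Prop :=
  ∀ (ΔU U : Fin N.n → ℝ) (I : Fin N.n → Fin N.n → ℝ), N.Axioms ΔU U I →
    ∀ x : N.NonRoot, (∑ l, I x.1 l) = ∑ y : N.NonRoot, L x y * ΔU y.1

/-- `C` is the response matrix of the electrical network obtained by unifying all the
superports: same graph and conductances, boundary vertices `M`; axioms (C) and (I). -/
def IsElecResponse (C : Matrix N.Bdry N.Bdry ℝ) : Prop :=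
  ∀ (Ub : N.Bdry → ℝ) (U : Fin N.n → ℝ) (I : Fin N.n → Fin N.n → ℝ),
    (∀ k l, I k l = N.c k l * (U k - U l)) →
    (∀ k, k ∉ N.M → ∑ l, I k l = 0) →
    (∀ v : N.Bdry, U v.1 = Ub v) →
    ∀ v : N.Bdry, (∑ l, I v.1 l) = ∑ u : N.Bdry, C v u * Ub u

/-- The sum of the weights of all valid forests. -/
noncomputable def validForestSum : ℝ :=
  ∑ H ∈ Finset.univ.filter (fun H => N.IsValidForest H), N.weight H

end Network
end Superport

/-!
The difference of two solutions solves the circuit with all `ΔU = 0`. For such a solution the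
dissipated energy `∑ c_kl (U_k - U_l)²` is twice the power `∑_k U_k ∑_l I_kl`, and the power
vanishes: `U` is constant on each superport and the net current into every superport is zero.
So `U` is constant along edges, hence constant, which gives uniqueness. For existence, the
axioms together with `U = 0` at one root form a square linear system in `U`; by the uniqueness
argument it is injective, hence surjective.
-/

section WeightedDifferences

variable {ι : Type*} [Fintype ι] {c : ι → ι → ℝ}

theorem sum_sum_mul_sub_eq_zero (hc : ∀ k l, c k l = c l k) (x : ι → ℝ) :
    ∑ k, ∑ l, c k l * (x k - x l) = 0 := by
  have h : ∑ k, ∑ l, c k l * (x k - x l) = ∑ k, ∑ l, -(c k l * (x k - x l)) := by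
    rw [Finset.sum_comm]
    exact Finset.sum_congr rfl fun k _ => Finset.sum_congr rfl fun l _ => by rw [hc]; ring
  simp only [Finset.sum_neg_distrib] at h
  linarith

theorem sum_sum_mul_sub_sq (hc : ∀ k l, c k l = c l k) (x : ι → ℝ) :
    ∑ k, ∑ l, c k l * (x k - x l) ^ 2 = 2 * ∑ k, x k * ∑ l, c k l * (x k - x l) := by
  have hswap : ∑ k, ∑ l, x l * (c l k * (x l - x k)) = ∑ k, x k * ∑ l, c k l * (x k - x l) := by
    rw [Finset.sum_comm]
    simp only [Finset.mul_sum]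
  calc ∑ k, ∑ l, c k l * (x k - x l) ^ 2
      = ∑ k, ∑ l, (x k * (c k l * (x k - x l)) + x l * (c l k * (x l - x k))) := by
        refine Finset.sum_congr rfl fun k _ => Finset.sum_congr rfl fun l _ => ?_
        rw [hc l k]; ring
    _ = ∑ k, x k * ∑ l, c k l * (x k - x l) + ∑ k, ∑ l, x l * (c l k * (x l - x k)) := by
        simp only [Finset.sum_add_distrib, Finset.mul_sum]
    _ = 2 * ∑ k, x k * ∑ l, c k l * (x k - x l) := by rw [hswap]; ring

theorem SimpleGraph.Connected.eq_of_sum_mul_sub_sq_eq_zero {G : SimpleGraph ι}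
    (hG : G.Connected) (hc_nonneg : ∀ k l, 0 ≤ c k l) (hc_pos : ∀ k l, G.Adj k l → 0 < c k l)
    {x : ι → ℝ} (h : ∑ k, ∑ l, c k l * (x k - x l) ^ 2 = 0) (k l : ι) : x k = x l := by
  have hterm : ∀ k l, c k l * (x k - x l) ^ 2 = 0 := fun k l =>
    (Finset.sum_eq_zero_iff_of_nonneg fun l _ => mul_nonneg (hc_nonneg k l) (sq_nonneg _)).mp
      ((Finset.sum_eq_zero_iff_of_nonneg fun k _ => Finset.sum_nonneg fun l _ =>
        mul_nonneg (hc_nonneg k l) (sq_nonneg _)).mp h k (Finset.mem_univ k)) l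
      (Finset.mem_univ l)
  have hadj : ∀ k l, G.Adj k l → x k = x l := fun k l hkl => by
    have hsq := (mul_eq_zero.mp (hterm k l)).resolve_left (hc_pos k l hkl).ne'
    exact sub_eq_zero.mp (pow_eq_zero_iff two_ne_zero |>.mp hsq)
  obtain ⟨w⟩ := hG k l
  induction w with
  | nil => rfl
  | cons hadj' _ ih => exact (hadj _ _ hadj').trans ih

end WeightedDifferences

namespace Superport
namespace Network

variable (N : Network)

lemma c_nonneg (k l : Fin N.n) : 0 ≤ N.c k l := by
  by_cases h : N.graph.Adj k l
  · exact (N.c_pos k l h).le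
  · rw [N.c_zero k l h]

variable {N}

lemma eq_of_mem_A {i j : Fin N.p} {v : Fin N.n} (hi : v ∈ N.A i) (hj : v ∈ N.A j) : i = j := by
  by_contra h
  exact Finset.disjoint_left.mp (N.A_disjoint i j h) hi hj

lemma mem_M_of_mem_A {i : Fin N.p} {v : Fin N.n} (hv : v ∈ N.A i) : v ∈ N.M :=
  N.mem_M_iff.mpr ⟨i, hv⟩

lemma filter_samePort_eq {i : Fin N.p} {v : Fin N.n} (hv : v ∈ N.A i) :
    Finset.univ.filter (N.samePort · v) = N.A i := by
  ext j
  rw [Finset.mem_filter]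
  simp only [Finset.mem_univ, true_and, samePort]
  exact ⟨fun ⟨i', hj, hv'⟩ => N.eq_of_mem_A hv' hv ▸ hj, fun hj => ⟨i, hj, hv⟩⟩

lemma sum_M (f : Fin N.n → ℝ) : ∑ k ∈ N.M, f k = ∑ i, ∑ k ∈ N.A i, f k :=
  Finset.sum_biUnion fun i _ j _ hij => N.A_disjoint i j hij

variable (N)

noncomputable def portRoot (i : Fin N.p) : Fin N.n := (N.A i).max' (N.A_nonempty i)

lemma portRoot_mem (i : Fin N.p) : N.portRoot i ∈ N.A i := (N.A i).max'_mem _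

variable {N}

lemma root_eq_portRoot {i : Fin N.p} {v : Fin N.n} (hv : v ∈ N.A i) :
    N.root v = N.portRoot i := by
  have h : ∃ j, v ∈ N.A j := ⟨i, hv⟩
  rw [root, dif_pos h]
  obtain rfl := N.eq_of_mem_A h.choose_spec hv
  rfl

variable (N) in
lemma root_portRoot (i : Fin N.p) : N.root (N.portRoot i) = N.portRoot i :=
  root_eq_portRoot (N.portRoot_mem i)

lemma portRoot_injective : Function.Injective N.portRoot := fun i j h =>
  N.eq_of_mem_A (N.portRoot_mem i) (h ▸ N.portRoot_mem j)

-- (P) is only assumed for the first `p - 1` superports; the last follows from `∑ₖ ∑ₗ Iₖₗ = 0`.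
lemma Axioms.sum_port_eq_zero {ΔU U : Fin N.n → ℝ} {I : Fin N.n → Fin N.n → ℝ}
    (h : N.Axioms ΔU U I) (i : Fin N.p) : ∑ k ∈ N.A i, ∑ l, I k l = 0 := by
  obtain ⟨hC, hI, hP, -⟩ := h
  rcases ne_or_eq i N.lastPort with hi | rfl
  · exact hP i hi
  have htotal : ∑ k, ∑ l, I k l = 0 := by
    simp only [hC]
    exact sum_sum_mul_sub_eq_zero N.c_symm U
  rw [← Finset.sum_subset (Finset.subset_univ N.M) fun k _ hk => hI k hk, N.sum_M,
    Finset.sum_eq_single N.lastPort (fun j _ hj => hP j hj) (by simp)] at htotal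
  exact htotal

lemma Axioms.sub {ΔU U₁ U₂ : Fin N.n → ℝ} {I₁ I₂ : Fin N.n → Fin N.n → ℝ}
    (h₁ : N.Axioms ΔU U₁ I₁) (h₂ : N.Axioms ΔU U₂ I₂) : N.Axioms 0 (U₁ - U₂) (I₁ - I₂) := by
  obtain ⟨hC₁, hI₁, hP₁, hB₁⟩ := h₁
  obtain ⟨hC₂, hI₂, hP₂, hB₂⟩ := h₂
  refine ⟨fun k l => ?_, fun k hk => ?_, fun i hi => ?_, fun k hk hr => ?_⟩
  · simp only [Pi.sub_apply, hC₁, hC₂]; ring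
  · simp only [Pi.sub_apply, Finset.sum_sub_distrib, hI₁ k hk, hI₂ k hk, sub_self]
  · simp only [Pi.sub_apply, Finset.sum_sub_distrib, hP₁ i hi, hP₂ i hi, sub_self]
  · simp only [Pi.sub_apply, Pi.zero_apply]; linarith [hB₁ k hk hr, hB₂ k hk hr]

lemma Axioms.voltage_eq_of_zero {U : Fin N.n → ℝ} {I : Fin N.n → Fin N.n → ℝ}
    (h : N.Axioms 0 U I) (k l : Fin N.n) : U k = U l := by
  have hports := h.sum_port_eq_zero
  obtain ⟨hC, hI, -, hB⟩ := h
  have hU_root : ∀ i, ∀ k ∈ N.A i, U k = U (N.portRoot i) := fun i k hk => by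
    rw [← N.root_eq_portRoot hk]
    rcases eq_or_ne (N.root k) k with hr | hr
    · rw [hr]
    · exact sub_eq_zero.mp (hB k (N.mem_M_of_mem_A hk) hr)
  have hpower : ∑ k, U k * ∑ l, I k l = 0 := by
    rw [← Finset.sum_subset (Finset.subset_univ N.M)
      fun k _ hk => mul_eq_zero_of_right _ (hI k hk), N.sum_M]
    refine Finset.sum_eq_zero fun i _ => ?_
    rw [Finset.sum_congr rfl fun k hk => by rw [hU_root i k hk], ← Finset.mul_sum,
      hports i, mul_zero]
  simp only [hC] at hpower
  refine N.connected.eq_of_sum_mul_sub_sq_eq_zero N.c_nonneg N.c_pos ?_ k l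
  rw [sum_sum_mul_sub_sq N.c_symm, hpower, mul_zero]

variable (N)

def current (U : Fin N.n → ℝ) (k l : Fin N.n) : ℝ := N.c k l * (U k - U l)

noncomputable def netCurrent : (Fin N.n → ℝ) →ₗ[ℝ] Fin N.n → ℝ where
  toFun U k := ∑ l, N.current U k l
  map_add' U V := by
    funext k
    simp only [current, Pi.add_apply, ← Finset.sum_add_distrib]
    exact Finset.sum_congr rfl fun l _ => by ring
  map_smul' a U := by
    funext k
    simp only [current, Pi.smul_apply, smul_eq_mul, RingHom.id_apply, Finset.mul_sum]
    exact Finset.sum_congr rfl fun l _ => by ring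

/-- One equation per vertex: (I) at interior vertices, (B) at non-root boundary vertices,
(P) at the roots of all superports but the last, and the normalisation `U = 0` at the root
of the last one. -/
noncomputable def circuitRow (k : Fin N.n) : (Fin N.n → ℝ) →ₗ[ℝ] ℝ :=
  let ev (j : Fin N.n) : (Fin N.n → ℝ) →ₗ[ℝ] ℝ := LinearMap.proj j
  if k ∉ N.M then ev k ∘ₗ N.netCurrent
  else if N.root k ≠ k then ev k - ev (N.root k)
  else if k = N.portRoot N.lastPort then ev k
  else ∑ j ∈ Finset.univ.filter (N.samePort · k), ev j ∘ₗ N.netCurrent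

noncomputable def circuitMap : (Fin N.n → ℝ) →ₗ[ℝ] Fin N.n → ℝ := LinearMap.pi N.circuitRow

noncomputable def circuitRhs (ΔU : Fin N.n → ℝ) (k : Fin N.n) : ℝ :=
  if k ∈ N.M ∧ N.root k ≠ k then ΔU k else 0

variable {N}

lemma axioms_of_circuitMap_eq {ΔU U : Fin N.n → ℝ} (h : N.circuitMap U = N.circuitRhs ΔU) :
    N.Axioms ΔU U (N.current U) := by
  have hrow : ∀ k, N.circuitRow k U = N.circuitRhs ΔU k := congrFun h
  refine ⟨fun k l => rfl, fun k hk => ?_, fun i hi => ?_, fun k hk hr => ?_⟩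
  · simpa [circuitRow, circuitRhs, hk, netCurrent] using hrow k
  · have hmem := N.portRoot_mem i
    have hne : N.portRoot i ≠ N.portRoot N.lastPort := portRoot_injective.ne hi
    simpa [circuitRow, circuitRhs, N.mem_M_of_mem_A hmem, N.root_portRoot, hne,
      N.filter_samePort_eq hmem, netCurrent] using hrow (N.portRoot i)
  · simpa [circuitRow, circuitRhs, hk, hr] using hrow k

lemma circuitMap_injective : Function.Injective N.circuitMap := by
  refine (injective_iff_map_eq_zero N.circuitMap).mpr fun U hU => ?_
  have hzero : N.circuitRhs 0 = 0 := by funext k; simp [circuitRhs]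
  have hconst := (axioms_of_circuitMap_eq (hU.trans hzero.symm)).voltage_eq_of_zero
  have hlast : U (N.portRoot N.lastPort) = 0 := by
    have := congrFun hU (N.portRoot N.lastPort)
    simpa [circuitMap, circuitRow, N.mem_M_of_mem_A (N.portRoot_mem _), N.root_portRoot]
      using this
  funext k
  rw [Pi.zero_apply, hconst k (N.portRoot N.lastPort), hlast]

end Network

/-- **Existence and uniqueness for superport circuits.**  For any superport circuit there
exist currents `I` and voltages `U` satisfying axioms (C), (I), (P), (B); the currents are
unique and the voltages are unique up to adding the same constant. -/
theorem exists_unique_voltages_currents (N : Network) (ΔU : Fin N.n → ℝ) :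
    (∃ U I, N.Axioms ΔU U I) ∧
    (∀ U₁ I₁ U₂ I₂, N.Axioms ΔU U₁ I₁ → N.Axioms ΔU U₂ I₂ →
      I₁ = I₂ ∧ ∃ const : ℝ, ∀ k, U₁ k = U₂ k + const) := by
  refine ⟨?_, fun U₁ I₁ U₂ I₂ h₁ h₂ => ?_⟩
  · obtain ⟨U, hU⟩ :=
      LinearMap.injective_iff_surjective.mp Network.circuitMap_injective (N.circuitRhs ΔU)
    exact ⟨U, _, Network.axioms_of_circuitMap_eq hU⟩
  have hconst : ∀ k l, U₁ k - U₂ k = U₁ l - U₂ l := (h₁.sub h₂).voltage_eq_of_zero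
  refine ⟨?_, U₁ (N.portRoot N.lastPort) - U₂ (N.portRoot N.lastPort), fun k => ?_⟩
  · funext k l
    rw [h₁.1, h₂.1]
    congr 1
    linarith [hconst k l]
  · linarith [hconst k (N.portRoot N.lastPort)]

end Superport
end

section
/- Let a superport circuit have prescribed voltage differences ΔU_{i,root(i)} = 1 for a fixed non-root boundary vertex i and ΔU_{k,root(k)} = 0 for every other non-root boundary vertex k, and let U, I satisfy axioms (C), (I), (P), (B). Consider the quotient of the graph by the {i}-equivalence, with the conductance between two distinct classes [u], [v] defined as c̄_{[u][v]} := Σ_{k∈[u], l∈[v]} c_{kl}, regarded as an electrical network whose two boundary vertices are [i] and [root(i)]. Then Ū([v]) := U_v − U_{root(i)} is a well-defined function on classes, and the voltages Ū together with the currents Ī_{[u][v]} := Σ_{k∈[u], l∈[v]} I_{kl} satisfy axioms (C) and (I) of this electrical circuit with prescribed voltages Ū([i]) = 1 and Ū([root(i)]) = 0. -/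
open Finset BigOperators
open scoped Classical

namespace Superport

/-!
Axiom (B) with `ΔU` vanishing away from `i` makes `U` constant on every superport not
containing `i`, so `U` descends to the `{i}`-classes, and (C) sums over pairs of classes.
A class other than `[i]` and `[root i]` is an interior vertex, where (I) applies, or a whole
superport, whose net current vanishes by (P); for the last superport this follows from the
antisymmetry of `I`, which makes the total current zero.
-/

section FiberSum

variable {α β R : Type*} [Fintype α] [DecidableEq β]

def fiberSum [AddCommMonoid R] (π : α → β) (f : α → α → R) (a b : β) : R :=
  ∑ k, ∑ l, if π k = a ∧ π l = b then f k l else 0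

theorem fiberSum_eq_mul_sub [Ring R] {π : α → β} {V : β → R} {c I : α → α → R}
    (hI : ∀ k l, I k l = c k l * (V (π k) - V (π l))) (a b : β) :
    fiberSum π I a b = fiberSum π c a b * (V a - V b) := by
  simp only [fiberSum, Finset.sum_mul]
  refine Finset.sum_congr rfl fun k _ => Finset.sum_congr rfl fun l _ => ?_
  split_ifs with h
  · rw [hI, h.1, h.2]
  · rw [zero_mul]

theorem sum_fiberSum_right [Fintype β] [AddCommMonoid R] (π : α → β) (f : α → α → R)
    (a : β) : ∑ b, fiberSum π f a b = ∑ k with π k = a, ∑ l, f k l := by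
  simp only [fiberSum, Finset.sum_filter]
  rw [Finset.sum_comm]
  refine Finset.sum_congr rfl fun k _ => ?_
  rw [Finset.sum_comm]
  split_ifs with hk <;> simp [hk]

end FiberSum

theorem sum_sum_eq_zero_of_antisymm {α : Type*} [Fintype α] {f : α → α → ℝ}
    (hf : ∀ k l, f l k = -f k l) : ∑ k, ∑ l, f k l = 0 := by
  have h : ∑ k, ∑ l, f k l = -∑ k, ∑ l, f k l :=
    calc ∑ k, ∑ l, f k l = ∑ k, ∑ l, -f l k :=
          Finset.sum_congr rfl fun k _ => Finset.sum_congr rfl fun l _ => hf l k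
      _ = -∑ k, ∑ l, f k l := by rw [Finset.sum_comm]; simp only [Finset.sum_neg_distrib]
  linarith

namespace Network

variable {N : Network} {X : Set (Fin N.n)} {u v k : Fin N.n} {j : Fin N.p}

theorem eq_of_mem_A_of_mem_A {j' : Fin N.p} (h : v ∈ N.A j) (h' : v ∈ N.A j') : j = j' := by
  by_contra hne
  exact Finset.disjoint_left.mp (N.A_disjoint j j' hne) h h'

theorem root_eq_max' (hv : v ∈ N.A j) : N.root v = (N.A j).max' ⟨v, hv⟩ := by
  have h : ∃ i, v ∈ N.A i := ⟨j, hv⟩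
  rw [root, dif_pos h]
  simp only [eq_of_mem_A_of_mem_A h.choose_spec hv]

theorem root_mem_A (hv : v ∈ N.A j) : N.root v ∈ N.A j := by
  rw [root_eq_max' hv]
  exact Finset.max'_mem _ _

theorem root_eq_root_of_mem_A (hu : u ∈ N.A j) (hv : v ∈ N.A j) : N.root u = N.root v := by
  rw [root_eq_max' hu, root_eq_max' hv]

theorem xSetoid_mk_eq_iff_of_notMem_M (hv : v ∉ N.M) :
    Quotient.mk (N.xSetoid X) k = Quotient.mk _ v ↔ k = v := by
  refine ⟨fun h => ?_, fun h => h ▸ rfl⟩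
  rcases Quotient.exact h with h | ⟨-, -, j, -, hvj⟩
  · exact h
  · exact absurd (N.mem_M_iff.mpr ⟨j, hvj⟩) hv

theorem xSetoid_mk_eq_iff_of_mem_A (hv : v ∈ N.A j) (hvX : v ∉ X) :
    Quotient.mk (N.xSetoid X) k = Quotient.mk _ v ↔ k ∈ N.A j ∧ k ∉ X := by
  refine ⟨fun h => ?_, fun ⟨hk, hkX⟩ => Quotient.sound (Or.inr ⟨hkX, hvX, j, hk, hv⟩)⟩
  rcases Quotient.exact h with rfl | ⟨hkX, -, j', hkj', hvj'⟩
  · exact ⟨hv, hvX⟩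
  · exact ⟨eq_of_mem_A_of_mem_A hvj' hv ▸ hkj', hkX⟩

namespace Axioms

variable {ΔU U : Fin N.n → ℝ} {I : Fin N.n → Fin N.n → ℝ}

theorem sum_sum_eq_zero (h : N.Axioms ΔU U I) : ∑ k, ∑ l, I k l = 0 :=
  sum_sum_eq_zero_of_antisymm fun k l => by rw [h.1, h.1, N.c_symm]; ring

theorem sum_port_eq_zero_s7 (h : N.Axioms ΔU U I) (j : Fin N.p) :
    ∑ k ∈ N.A j, ∑ l, I k l = 0 := by
  by_cases hj : j = N.lastPort
  · have htotal := h.sum_sum_eq_zero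
    rwa [← Finset.sum_add_sum_compl N.M,
      Finset.sum_eq_zero fun k hk => h.2.1 k (Finset.mem_compl.mp hk), add_zero, M,
      Finset.sum_biUnion fun x _ y _ hxy => N.A_disjoint x y hxy,
      Finset.sum_eq_single_of_mem j (Finset.mem_univ _) fun j' _ hj' => h.2.2.1 j' (hj ▸ hj')]
      at htotal
  · exact h.2.2.1 j hj

theorem eq_root (h : N.Axioms ΔU U I) (hk : k ∈ N.M) (hΔ : ΔU k = 0) :
    U k = U (N.root k) := by
  by_cases hr : N.root k = k
  · rw [hr]
  · linarith [h.2.2.2 k hk hr]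

theorem eq_of_xSetoid (h : N.Axioms ΔU U I) (hΔ : ∀ k ∉ X, ΔU k = 0)
    (huv : N.xSetoid X u v) : U u = U v := by
  rcases huv with rfl | ⟨huX, hvX, j, huj, hvj⟩
  · rfl
  · rw [h.eq_root (N.mem_M_iff.mpr ⟨j, huj⟩) (hΔ u huX),
      h.eq_root (N.mem_M_iff.mpr ⟨j, hvj⟩) (hΔ v hvX), root_eq_root_of_mem_A huj hvj]

theorem sum_xSetoid_class_eq_zero (h : N.Axioms ΔU U I) (hvX : v ∉ X)
    (hX : ∀ x ∈ X, ¬ N.samePort v x) :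
    ∑ k with Quotient.mk (N.xSetoid X) k = Quotient.mk _ v, ∑ l, I k l = 0 := by
  by_cases hvM : v ∈ N.M
  · obtain ⟨j, hvj⟩ := N.mem_M_iff.mp hvM
    have hclass : ({k | Quotient.mk (N.xSetoid X) k = Quotient.mk _ v} : Finset _) = N.A j := by
      ext k
      rw [Finset.mem_filter, xSetoid_mk_eq_iff_of_mem_A hvj hvX]
      exact ⟨fun hk => hk.2.1, fun hk => ⟨Finset.mem_univ _, hk,
        fun hkX => hX k hkX ⟨j, hvj, hk⟩⟩⟩
    rw [hclass]
    exact h.sum_port_eq_zero_s7 j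
  · simp only [xSetoid_mk_eq_iff_of_notMem_M hvM, Finset.filter_eq', Finset.mem_univ, if_true,
      Finset.sum_singleton]
    exact h.2.1 v hvM

end Axioms

end Network

/-- **Gluing lemma** (Lemma 6.3): if in a superport circuit `ΔU_{i,root(i)} = 1` and all
the other prescribed voltage differences vanish, then the voltages descend to the quotient
by the `{i}`-equivalence, and together with the summed currents and conductances they
satisfy axioms (C) and (I) of the quotient electrical circuit with boundary vertices
`[i]`, `[root i]` and prescribed voltages `1`, `0`. -/
theorem gluing (N : Network) (i : Fin N.n) (hi : i ∈ N.M) (hir : N.root i ≠ i)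
    (U : Fin N.n → ℝ) (I : Fin N.n → Fin N.n → ℝ)
    (hax : N.Axioms (fun k => if k = i then 1 else 0) U I) :
    ∃ Ubar : Quotient (N.xSetoid {i}) → ℝ,
      (∀ v : Fin N.n, Ubar (Quotient.mk (N.xSetoid {i}) v) = U v - U (N.root i)) ∧
      Ubar (Quotient.mk (N.xSetoid {i}) i) = 1 ∧
      Ubar (Quotient.mk (N.xSetoid {i}) (N.root i)) = 0 ∧
      (∀ a b : Quotient (N.xSetoid {i}),
        (∑ k, ∑ l, if Quotient.mk (N.xSetoid {i}) k = a ∧ Quotient.mk (N.xSetoid {i}) l = b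
          then I k l else 0) =
        (∑ k, ∑ l, if Quotient.mk (N.xSetoid {i}) k = a ∧ Quotient.mk (N.xSetoid {i}) l = b
          then N.c k l else 0) * (Ubar a - Ubar b)) ∧
      (∀ a : Quotient (N.xSetoid {i}),
        a ≠ Quotient.mk (N.xSetoid {i}) i → a ≠ Quotient.mk (N.xSetoid {i}) (N.root i) →
        ∑ b : Quotient (N.xSetoid {i}),
          (∑ k, ∑ l, if Quotient.mk (N.xSetoid {i}) k = a ∧ Quotient.mk (N.xSetoid {i}) l = b
            then I k l else 0) = 0) := by
  have hΔ : ∀ k ∉ ({i} : Set (Fin N.n)), (if k = i then 1 else 0 : ℝ) = 0 :=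
    fun k hk => if_neg hk
  refine ⟨Quotient.lift (fun v => U v - U (N.root i)) fun u v huv => by
      rw [hax.eq_of_xSetoid hΔ huv], fun v => rfl, ?_, sub_self _, ?_, fun a ha hr => ?_⟩
  · simpa using hax.2.2.2 i hi hir
  · refine fiberSum_eq_mul_sub fun k l => ?_
    rw [hax.1]
    simp only [Quotient.lift_mk]
    ring
  · induction a using Quotient.ind with | _ v => ?_
    have hvi : v ∉ ({i} : Set (Fin N.n)) := fun hv => ha (congrArg _ hv)
    refine (sum_fiberSum_right (Quotient.mk _) I _).trans ?_
    refine hax.sum_xSetoid_class_eq_zero hvi ?_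
    rintro x rfl ⟨j, hvj, hij⟩
    exact hr (Quotient.sound (Or.inr ⟨hvi, hir, j, hvj, Network.root_mem_A hij⟩))

end Superport
end
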